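/- For every integer n ≥ 1, the map f is scaling on the disk 1 + 2^{n+1} + 2^{n+3}ℤ₂ with scaling ratio 2^{−n}: for all x, y in this disk, |f(x) − f(y)|₂ = 2^{−n}·|x − y|₂. Moreover, for every integer n ≥ 2, f(1 + 2^{n+1} + 2^{n+3}ℤ₂) = 2^{2n} + 2^{2n+3}ℤ₂ as sets. -/

import Mathlib

open Function Set

lemma qn2 : ‖(2:ℚ_[2])‖ = (1/2:ℝ) := by
  have h := @Padic.norm_p 2 _
  norm_num at h ⊢
  exact_mod_cast h

lemma qn2pow (k : ℕ) : ‖(2:ℚ_[2])^k‖ = (1/2:ℝ)^k := by rw [norm_pow, qn2]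

lemma qnodd (k : ℤ) (hk : ¬ (2:ℤ) ∣ k) : ‖(k:ℚ_[2])‖ = 1 := by
  apply le_antisymm (Padic.norm_int_le_one k)
  by_contra h
  push_neg at h
  exact hk ((Padic.norm_intCast_lt_one_iff (k := k)).1 h)

lemma qn9 : ‖(9:ℚ_[2])‖ = 1 := by
  have := qnodd 9 (by norm_num); exact_mod_cast this

lemma qn3 : ‖(3:ℚ_[2])‖ = 1 := by
  have := qnodd 3 (by norm_num); exact_mod_cast this

lemma qn94 : ‖(9/4:ℚ_[2])‖ = 4 := by
  rw [norm_div, qn9]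
  have : (4:ℚ_[2]) = 2^2 := by norm_num
  rw [this, qn2pow]
  norm_num

lemma qadd_left {a b : ℚ_[2]} (h : ‖b‖ < ‖a‖) : ‖a + b‖ = ‖a‖ := by
  rw [Padic.add_eq_max_of_ne (ne_of_gt h)]
  exact max_eq_left h.le

/-- The cubic polynomial `f(x) = (9/4)·x·(x−1)²` acting on `ℚ₂`. -/
noncomputable def f : ℚ_[2] → ℚ_[2] := fun x => (9 / 4 : ℚ_[2]) * x * (x - 1) ^ 2

/-- For every `n ≥ 1`, `f` is scaling on `1 + 2^{n+1} + 2^{n+3}ℤ₂` with scaling ratio `2^{−n}`;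
moreover for every `n ≥ 2`, `f(1 + 2^{n+1} + 2^{n+3}ℤ₂) = 2^{2n} + 2^{2n+3}ℤ₂` as sets. -/
theorem stmt12 (n : ℕ) :
    (1 ≤ n → ∀ x y : ℚ_[2],
        ‖x - (1 + 2 ^ (n + 1))‖ ≤ (1 / 2 : ℝ) ^ (n + 3) →
        ‖y - (1 + 2 ^ (n + 1))‖ ≤ (1 / 2 : ℝ) ^ (n + 3) →
        ‖f x - f y‖ = (1 / 2 : ℝ) ^ n * ‖x - y‖) ∧
    (2 ≤ n →
      f '' {x : ℚ_[2] | ‖x - (1 + 2 ^ (n + 1))‖ ≤ (1 / 2 : ℝ) ^ (n + 3)} =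
        {x : ℚ_[2] | ‖x - 2 ^ (2 * n)‖ ≤ (1 / 2 : ℝ) ^ (2 * n + 3)}) := by
  have hhalf : (0:ℝ) < 1/2 := by norm_num
  have hmono : ∀ {a b : ℕ}, a ≤ b → (1/2:ℝ)^b ≤ (1/2:ℝ)^a := fun h =>
    pow_le_pow_of_le_one (by norm_num) (by norm_num) h
  have main1 : 1 ≤ n → ∀ x y : ℚ_[2],
        ‖x - (1 + 2 ^ (n + 1))‖ ≤ (1 / 2 : ℝ) ^ (n + 3) →
        ‖y - (1 + 2 ^ (n + 1))‖ ≤ (1 / 2 : ℝ) ^ (n + 3) →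
        ‖f x - f y‖ = (1 / 2 : ℝ) ^ n * ‖x - y‖ := by
    intro hn x y hx hy
    have key : f x - f y = (9/4 : ℚ_[2]) * (x - y) *
        ((2^(n+2) + ((x - (1+2^(n+1))) + (y - (1+2^(n+1))))) +
         ((x-1)^2 + (x-1)*(y-1) + (y-1)^2)) := by
      simp only [f]; ring
    have hxt : ‖x - 1‖ ≤ (1/2:ℝ)^(n+1) := by
      have e : x - 1 = 2^(n+1) + (x - (1+2^(n+1))) := by ring
      rw [e]
      refine le_trans (Padic.nonarchimedean _ _) (max_le ?_ ?_)
      · rw [qn2pow]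
      · exact le_trans hx (hmono (by omega))
    have hyt : ‖y - 1‖ ≤ (1/2:ℝ)^(n+1) := by
      have e : y - 1 = 2^(n+1) + (y - (1+2^(n+1))) := by ring
      rw [e]
      refine le_trans (Padic.nonarchimedean _ _) (max_le ?_ ?_)
      · rw [qn2pow]
      · exact le_trans hy (hmono (by omega))
    have hquad : ‖(x-1)^2 + (x-1)*(y-1) + (y-1)^2‖ ≤ (1/2:ℝ)^(n+3) := by
      have h1 : ‖(x-1)^2‖ ≤ (1/2:ℝ)^(n+3) := by
        rw [norm_pow]
        calc ‖x-1‖^2 ≤ ((1/2:ℝ)^(n+1))^2 := by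
              apply pow_le_pow_left₀ (norm_nonneg _) hxt
          _ = (1/2:ℝ)^(2*n+2) := by ring
          _ ≤ (1/2:ℝ)^(n+3) := hmono (by omega)
      have h2 : ‖(x-1)*(y-1)‖ ≤ (1/2:ℝ)^(n+3) := by
        rw [norm_mul]
        calc ‖x-1‖ * ‖y-1‖ ≤ (1/2:ℝ)^(n+1) * (1/2:ℝ)^(n+1) := by
              apply mul_le_mul hxt hyt (norm_nonneg _) (by positivity)
          _ = (1/2:ℝ)^(2*n+2) := by rw [← pow_add]; ring_nf
          _ ≤ (1/2:ℝ)^(n+3) := hmono (by omega)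
      have h3 : ‖(y-1)^2‖ ≤ (1/2:ℝ)^(n+3) := by
        rw [norm_pow]
        calc ‖y-1‖^2 ≤ ((1/2:ℝ)^(n+1))^2 := by
              apply pow_le_pow_left₀ (norm_nonneg _) hyt
          _ = (1/2:ℝ)^(2*n+2) := by ring
          _ ≤ (1/2:ℝ)^(n+3) := hmono (by omega)
      refine le_trans (Padic.nonarchimedean _ _) (max_le (le_trans (Padic.nonarchimedean _ _) (max_le h1 h2)) h3)
    have hsum : ‖(2:ℚ_[2])^(n+2) + ((x - (1+2^(n+1))) + (y - (1+2^(n+1))))‖ = (1/2:ℝ)^(n+2) := by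
      rw [qadd_left, qn2pow]
      rw [qn2pow]
      calc ‖(x - (1+2^(n+1))) + (y - (1+2^(n+1)))‖ ≤ (1/2:ℝ)^(n+3) := by
            refine le_trans (Padic.nonarchimedean _ _) (max_le hx hy)
        _ < (1/2:ℝ)^(n+2) := pow_lt_pow_right_of_lt_one₀ (by norm_num) (by norm_num) (by omega)
    have hfull : ‖(2^(n+2) + ((x - (1+2^(n+1))) + (y - (1+2^(n+1))))) +
         ((x-1)^2 + (x-1)*(y-1) + (y-1)^2)‖ = (1/2:ℝ)^(n+2) := by
      rw [qadd_left, hsum]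
      rw [hsum]
      calc ‖(x-1)^2 + (x-1)*(y-1) + (y-1)^2‖ ≤ (1/2:ℝ)^(n+3) := hquad
        _ < (1/2:ℝ)^(n+2) := pow_lt_pow_right_of_lt_one₀ (by norm_num) (by norm_num) (by omega)
    rw [key, norm_mul, norm_mul, qn94, hfull]
    rw [pow_add]
    ring
  refine ⟨main1, ?_⟩
  intro hn
  ext b
  simp only [Set.mem_image, Set.mem_setOf_eq]
  constructor
  · rintro ⟨x, hx, rfl⟩
    have hc : ‖f (1+2^(n+1) : ℚ_[2]) - 2^(2*n)‖ ≤ (1/2:ℝ)^(2*n+3) := by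
      have e : f (1+2^(n+1) : ℚ_[2]) - 2^(2*n) = 2^(2*n+3) + 9*2^(3*n+1) := by
        simp only [f]; ring
      rw [e]
      refine le_trans (Padic.nonarchimedean _ _) (max_le ?_ ?_)
      · rw [qn2pow]
      · rw [norm_mul, qn9, one_mul, qn2pow]; exact hmono (by omega)
    have hfx : ‖f x - f (1+2^(n+1) : ℚ_[2])‖ ≤ (1/2:ℝ)^(2*n+3) := by
      have hcenter : ‖(1+2^(n+1) : ℚ_[2]) - (1 + 2 ^ (n + 1))‖ ≤ (1/2:ℝ)^(n+3) := by
        simp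
      rw [main1 (by omega) x (1+2^(n+1)) hx hcenter]
      calc (1/2:ℝ)^n * ‖x - (1+2^(n+1) : ℚ_[2])‖ ≤ (1/2:ℝ)^n * (1/2:ℝ)^(n+3) := by
            exact mul_le_mul_of_nonneg_left hx (by positivity)
        _ = (1/2:ℝ)^(2*n+3) := by rw [← pow_add]; congr 1; omega
    have e2 : f x - 2^(2*n) = (f x - f (1+2^(n+1) : ℚ_[2])) + (f (1+2^(n+1) : ℚ_[2]) - 2^(2*n)) := by
      ring
    calc ‖f x - 2^(2*n)‖ ≤ max ‖f x - f (1+2^(n+1) : ℚ_[2])‖ ‖f (1+2^(n+1) : ℚ_[2]) - 2^(2*n)‖ := by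
          rw [e2]; exact Padic.nonarchimedean _ _
      _ ≤ (1/2:ℝ)^(2*n+3) := max_le hfx hc
  · intro hb
    set D : ℚ_[2] := 9 * 2^(2*n) with hD
    have hDnorm : ‖D‖ = (1/2:ℝ)^(2*n) := by rw [hD, norm_mul, qn9, one_mul, qn2pow]
    have hDne : D ≠ 0 := by
      intro h; rw [h, norm_zero] at hDnorm
      have : (0:ℝ) < (1/2:ℝ)^(2*n) := by positivity
      linarith [hDnorm]
    set β : ℚ_[2] := b / D with hβ
    have hbD : ‖b - D‖ ≤ (1/2:ℝ)^(2*n+3) := by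
      have e : b - D = (b - 2^(2*n)) + (-(2^(2*n+3))) := by rw [hD]; ring
      rw [e]
      refine le_trans (Padic.nonarchimedean _ _) (max_le hb ?_)
      rw [norm_neg, qn2pow]
    have hβ1 : ‖β - 1‖ ≤ (1/8:ℝ) := by
      have e : β - 1 = (b - D)/D := by rw [hβ, sub_div, div_self hDne]
      rw [e, norm_div, hDnorm, div_le_iff₀ (by positivity)]
      calc ‖b - D‖ ≤ (1/2:ℝ)^(2*n+3) := hbD
        _ = 1/8 * (1/2)^(2*n) := by rw [pow_add]; ring
    have hβle : ‖β‖ ≤ 1 := by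
      have e : β = 1 + (β - 1) := by ring
      rw [e]
      refine le_trans (Padic.nonarchimedean _ _) (max_le (by simp) (le_trans hβ1 (by norm_num)))
    set β₀ : ℤ_[2] := ⟨β, hβle⟩ with hβ₀
    set F : Polynomial ℤ_[2] :=
      Polynomial.X^2 + Polynomial.C (2^(n+1)) * Polynomial.X^3 - Polynomial.C β₀ with hF
    have heval : ∀ w : ℤ_[2], F.eval w = w^2 + 2^(n+1)*w^3 - β₀ := by
      intro w; simp [hF]
    have c2 : ((2:ℤ_[2]):ℚ_[2]) = 2 := rfl
    have c3 : ((3:ℤ_[2]):ℚ_[2]) = 3 := rfl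
    have hde : F.derivative.eval 1 = 2 + 3*2^(n+1) := by
      simp [hF, Polynomial.derivative_pow]
      ring
    have hd2 : ‖F.derivative.eval 1‖ = (1/2:ℝ) := by
      rw [hde, PadicInt.norm_def]
      push_cast
      rw [c2, c3]
      rw [qadd_left, qn2]
      rw [qn2, norm_mul, qn3, one_mul, qn2pow]
      calc (1/2:ℝ)^(n+1) < (1/2:ℝ)^1 :=
            pow_lt_pow_right_of_lt_one₀ (by norm_num) (by norm_num) (by omega)
        _ = 1/2 := by norm_num
    have he1 : ‖F.eval 1‖ ≤ (1/8:ℝ) := by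
      have e : F.eval 1 = 2^(n+1) + (1 - β₀) := by rw [heval 1]; ring
      rw [e, PadicInt.norm_def]
      push_cast
      rw [c2]
      refine le_trans (Padic.nonarchimedean _ _) (max_le ?_ ?_)
      · rw [qn2pow]
        calc (1/2:ℝ)^(n+1) ≤ (1/2:ℝ)^3 := hmono (by omega)
          _ = 1/8 := by norm_num
      · rw [show (1 - β : ℚ_[2]) = -(β - 1) by ring, norm_neg]
        exact hβ1
    have hcond : ‖F.eval 1‖ < ‖F.derivative.eval 1‖^2 := by
      rw [hd2]
      calc ‖F.eval 1‖ ≤ 1/8 := he1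
        _ < (1/2:ℝ)^2 := by norm_num
    obtain ⟨z, hz0, hz1, -, -⟩ := hensels_lemma (F := F) (a := 1) hcond
    rw [Polynomial.coe_aeval_eq_eval, hd2] at hz1
    have hz14 : ‖z - 1‖ ≤ (1/4:ℝ) := by
      have h2 : ‖z - 1‖ < ((2:ℕ):ℝ)^((-2:ℤ)+1) := by
        have e2 : ((2:ℕ):ℝ)^((-2:ℤ)+1) = 1/2 := by norm_num
        rw [e2]; exact hz1
      have h3 := (PadicInt.norm_le_pow_iff_norm_lt_pow_add_one (z-1) (-2)).2 h2
      calc ‖z-1‖ ≤ ((2:ℕ):ℝ)^(-2:ℤ) := h3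
        _ = 1/4 := by norm_num
    refine ⟨1 + 2^(n+1) * (z : ℚ_[2]), ?_, ?_⟩
    · have e : (1 + 2^(n+1) * (z:ℚ_[2])) - (1+2^(n+1)) = 2^(n+1) * ((z - 1 : ℤ_[2]) : ℚ_[2]) := by
        push_cast; ring
      rw [e, norm_mul, qn2pow, ← PadicInt.norm_def]
      calc (1/2:ℝ)^(n+1) * ‖z-1‖ ≤ (1/2:ℝ)^(n+1) * (1/4) := by
            exact mul_le_mul_of_nonneg_left hz14 (by positivity)
        _ = (1/2:ℝ)^(n+3) := by rw [pow_succ, pow_succ]; ring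
    · have hzq : (z:ℚ_[2])^2 + 2^(n+1)*(z:ℚ_[2])^3 = β := by
        rw [Polynomial.coe_aeval_eq_eval, heval z] at hz0
        have h2 : (z^2 + 2^(n+1)*z^3 : ℤ_[2]) = β₀ := by
          have := sub_eq_zero.mp hz0
          exact this
        have h3 := congrArg (fun w : ℤ_[2] => (w : ℚ_[2])) h2
        push_cast at h3
        rw [c2] at h3
        exact h3
      show (9/4:ℚ_[2]) * (1 + 2^(n+1)*(z:ℚ_[2])) * ((1 + 2^(n+1)*(z:ℚ_[2])) - 1)^2 = b
      have e : (9/4:ℚ_[2]) * (1 + 2^(n+1)*(z:ℚ_[2])) * ((1 + 2^(n+1)*(z:ℚ_[2])) - 1)^2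
          = D * ((z:ℚ_[2])^2 + 2^(n+1)*(z:ℚ_[2])^3) := by rw [hD]; ring
      rw [e, hzq, hβ, mul_comm, div_mul_cancel₀ b hDne]
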